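/- arXiv:2103.02067 — 2 statements merged into one kernel-verified Lean document; each statement's English description precedes it below -/
import Mathlib

section
/- Let H be a complex Hilbert space and T a compact self-adjoint operator on H. Suppose there is ε_0 > 0 such that for every ε ∈ (0, ε_0) there exist compact self-adjoint operators T_ε and T'_ε with T = T_ε + T'_ε, real numbers C_ε^+ and C_ε^− with lim_{λ→0⁺} λ·n_±(λ, T_ε) = C_ε^±, and limsup_{λ→0⁺} λ·n(λ, T'_ε) ≤ ε. Then the limits C^± = lim_{ε→0⁺} C_ε^± exist, and lim_{λ→0⁺} λ·n_±(λ, T) = C^±. -/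
open MeasureTheory Filter Topology
open scoped ENNReal NNReal

noncomputable section

variable {H : Type*} [NormedAddCommGroup H] [InnerProductSpace ℂ H] [CompleteSpace H]

/-- The eigenvalue counting function `n_+(λ, T)` of a (compact self-adjoint) operator `T`:
the supremum of `dim L` over finite-dimensional subspaces `L ⊆ H` such that
`⟨T u, u⟩ > λ ‖u‖²` for every nonzero `u ∈ L`; this is the number of eigenvalues of `T`
in `(λ, ∞)` counted with multiplicity. `n_-(λ, T) = nPlus (-T) λ` and
`n(λ, T) = nPlus T λ + nPlus (-T) λ`. -/
def nPlus (T : H →L[ℂ] H) (lam : ℝ) : ℝ≥0∞ :=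
  ⨆ L : {L : Submodule ℂ H // FiniteDimensional ℂ L ∧
      ∀ u : H, u ∈ L → u ≠ 0 → lam * ‖u‖ ^ 2 < (@inner ℂ H _ (T u) u).re},
    (Module.finrank ℂ (L : Submodule ℂ H) : ℝ≥0∞)

lemma le_nPlus (A : H →L[ℂ] H) (a : ℝ) (M : Submodule ℂ H)
    (hfd : FiniteDimensional ℂ M)
    (hM : ∀ u : H, u ∈ M → u ≠ 0 → a * ‖u‖ ^ 2 < (@inner ℂ H _ (A u) u).re) :
    (Module.finrank ℂ M : ℝ≥0∞) ≤ nPlus A a :=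
  le_iSup (fun L : {L : Submodule ℂ H // FiniteDimensional ℂ L ∧
      ∀ u : H, u ∈ L → u ≠ 0 → a * ‖u‖ ^ 2 < (@inner ℂ H _ (A u) u).re} =>
    (Module.finrank ℂ (L : Submodule ℂ H) : ℝ≥0∞)) ⟨M, hfd, hM⟩

lemma nPlus_add_le (A B : H →L[ℂ] H) (hA : IsSelfAdjoint A) (a b : ℝ) :
    nPlus (A + B) (a + b) ≤ nPlus A a + nPlus B b := by
  rw [nPlus]
  refine iSup_le fun Lx => ?_
  obtain ⟨L, hLfd, hL⟩ := Lx
  haveI : FiniteDimensional ℂ L := hLfd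
  haveI : CompleteSpace L := FiniteDimensional.complete ℂ L
  -- the compression of A to L
  set S : L →L[ℂ] L := (Submodule.orthogonalProjectionOnto L).comp (A.comp L.subtypeL) with hS
  have hinner : ∀ x y : L, (@inner ℂ L _ (S x) y) = @inner ℂ H _ (A x) y := by
    intro x y
    simp only [hS, ContinuousLinearMap.comp_apply, Submodule.subtypeL_apply]
    exact Submodule.inner_orthogonalProjectionOnto_eq_of_mem_right (K := L) y (A ↑x)
  have hinner' : ∀ x y : L, (@inner ℂ L _ x (S y)) = @inner ℂ H _ (x : H) (A y) := by
    intro x y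
    simp only [hS, ContinuousLinearMap.comp_apply, Submodule.subtypeL_apply]
    exact Submodule.inner_orthogonalProjectionOnto_eq_of_mem_left (K := L) x (A ↑y)
  have hsym : (S : L →ₗ[ℂ] L).IsSymmetric := by
    intro x y
    show (@inner ℂ L _ (S x) y) = @inner ℂ L _ x (S y)
    rw [hinner, hinner']
    exact hA.isSymmetric x y
  classical
  set n := Module.finrank ℂ L with hn
  set ob := hsym.eigenvectorBasis rfl with hob
  set mu := hsym.eigenvalues rfl with hmu
  have hSb : ∀ i, S (ob i) = (mu i : ℂ) • ob i := fun i => hsym.apply_eigenvectorBasis rfl i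
  have key : ∀ u' : L, (@inner ℂ H _ (A ↑u') ↑u').re = ∑ i, mu i * ‖ob.repr u' i‖ ^ 2 := by
    intro u'
    rw [← hinner]
    have hsum : S u' = ∑ i, ob.repr u' i • (mu i : ℂ) • ob i := by
      conv_lhs => rw [← ob.sum_repr u']
      rw [map_sum]
      exact Finset.sum_congr rfl fun i _ => by rw [ContinuousLinearMap.map_smul, hSb i]
    rw [hsum, sum_inner, Complex.re_sum]
    refine Finset.sum_congr rfl fun i _ => ?_
    rw [inner_smul_left, inner_smul_left, ← ob.repr_apply_apply]
    set c := ob.repr u' i with hc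
    have h1 : (starRingEnd ℂ) ((mu i : ℝ) : ℂ) = ((mu i : ℝ) : ℂ) := Complex.conj_ofReal _
    have h2 : (starRingEnd ℂ) c * (((mu i : ℝ) : ℂ) * c) = ((mu i * ‖c‖ ^ 2 : ℝ) : ℂ) := by
      have h3 : c * (starRingEnd ℂ) c = ((Complex.normSq c : ℝ) : ℂ) := Complex.mul_conj c
      have h4 : Complex.normSq c = ‖c‖ ^ 2 := by
        rw [Complex.sq_norm]
      rw [Complex.ofReal_mul, ← h4, ← h3]
      ring
    rw [h1, h2, Complex.ofReal_re]
  have keynorm : ∀ u' : L, ‖(u' : H)‖ ^ 2 = ∑ i, ‖ob.repr u' i‖ ^ 2 := by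
    intro u'
    have h1 : ‖(u' : H)‖ = ‖u'‖ := rfl
    rw [h1, ← ob.repr.norm_map u', EuclideanSpace.norm_eq, Real.sq_sqrt]
    positivity
  set I : Finset (Fin n) := Finset.univ.filter (fun i => a < mu i) with hI
  set P : Submodule ℂ L := Submodule.span ℂ (⇑ob.toBasis '' (↑I : Set (Fin n))) with hP
  set Q : Submodule ℂ L := Submodule.span ℂ (⇑ob.toBasis '' ((↑I : Set (Fin n))ᶜ)) with hQ
  set Mp : Submodule ℂ H := P.map L.subtype with hMp
  set Mm : Submodule ℂ H := Q.map L.subtype with hMm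
  have hspan : P ⊔ Q = ⊤ := by
    rw [hP, hQ, ← Submodule.span_union, ← Set.image_union, Set.union_compl_self,
      Set.image_univ, ob.toBasis.span_eq]
  have hdim : Module.finrank ℂ L ≤ Module.finrank ℂ Mp + Module.finrank ℂ Mm := by
    rw [hMp, hMm, Submodule.finrank_map_subtype_eq, Submodule.finrank_map_subtype_eq]
    have h1 := Submodule.finrank_sup_add_finrank_inf_eq P Q
    have h2 : Module.finrank ℂ ↥(P ⊔ Q) = Module.finrank ℂ L := by
      rw [hspan]; exact finrank_top ℂ L
    omega
  have hcoef : ∀ (s : Set (Fin n)) (u' : L), u' ∈ Submodule.span ℂ (⇑ob.toBasis '' s) →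
      ∀ i, i ∉ s → ob.repr u' i = 0 := by
    intro s u' hu' i hi
    have hsupp := Module.Basis.repr_support_subset_of_mem_span ob.toBasis s hu'
    by_contra hzero
    refine hi (hsupp ?_)
    rw [Finset.mem_coe, Finsupp.mem_support_iff, ob.coe_toBasis_repr_apply]
    exact hzero
  have hexists : ∀ u' : L, u' ≠ 0 → ∃ i, ob.repr u' i ≠ 0 := by
    intro u' hne
    by_contra hall
    push_neg at hall
    refine hne (ob.repr.map_eq_zero_iff.mp (by ext i; simpa using hall i))
  have hMpfd : FiniteDimensional ℂ Mp := Module.Finite.map P L.subtype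
  have hMmfd : FiniteDimensional ℂ Mm := Module.Finite.map Q L.subtype
  have hApos : ∀ u : H, u ∈ Mp → u ≠ 0 → a * ‖u‖ ^ 2 < (@inner ℂ H _ (A u) u).re := by
    rintro u hu hne
    obtain ⟨u', hu', rfl⟩ := hu
    have hu'ne : u' ≠ 0 := fun h => hne (by simp [h])
    rw [Submodule.subtype_apply, key, keynorm, Finset.mul_sum]
    obtain ⟨i₀, hi₀⟩ := hexists u' hu'ne
    have hi₀I : i₀ ∈ I := by
      by_contra hc
      exact hi₀ (hcoef _ u' hu' i₀ (by simpa [hI] using hc))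
    refine Finset.sum_lt_sum (fun i _ => ?_) ⟨i₀, Finset.mem_univ i₀, ?_⟩
    · by_cases hci : ob.repr u' i = 0
      · simp [hci]
      · have hiI : i ∈ I := by
          by_contra hc
          exact hci (hcoef _ u' hu' i (by simpa [hI] using hc))
        have hlt : a < mu i := by
          have := Finset.mem_filter.mp hiI
          exact this.2
        have hpos : (0:ℝ) < ‖ob.repr u' i‖ ^ 2 := pow_pos (norm_pos_iff.mpr hci) 2
        nlinarith
    · have hlt : a < mu i₀ := (Finset.mem_filter.mp hi₀I).2
      have hpos : (0:ℝ) < ‖ob.repr u' i₀‖ ^ 2 := pow_pos (norm_pos_iff.mpr hi₀) 2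
      nlinarith
  have hBpos : ∀ u : H, u ∈ Mm → u ≠ 0 → b * ‖u‖ ^ 2 < (@inner ℂ H _ (B u) u).re := by
    rintro u hu hne
    obtain ⟨u', hu', rfl⟩ := hu
    have huL : (u' : H) ∈ L := u'.2
    have hABu := hL u' huL (fun h => hne (by simp [h]))
    have hAle : (@inner ℂ H _ (A ↑u') ↑u').re ≤ a * ‖(u' : H)‖ ^ 2 := by
      rw [key, keynorm, Finset.mul_sum]
      refine Finset.sum_le_sum fun i _ => ?_
      by_cases hci : ob.repr u' i = 0
      · simp [hci]
      · have hiI : i ∉ (↑I : Set (Fin n)) := by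
          intro hc
          have hinc : i ∉ ((↑I : Set (Fin n))ᶜ) := by simpa using hc
          exact hci (hcoef _ u' hu' i hinc)
        have hnlt : ¬ a < mu i := by
          intro hc
          exact hiI (Finset.mem_coe.mpr (Finset.mem_filter.mpr ⟨Finset.mem_univ _, hc⟩))
        have hle := le_of_not_gt hnlt
        have hpos : (0:ℝ) ≤ ‖ob.repr u' i‖ ^ 2 := by positivity
        nlinarith
    have hsplit : (@inner ℂ H _ ((A + B) (u' : H)) (u' : H)).re
        = (@inner ℂ H _ (A (u' : H)) (u' : H)).re + (@inner ℂ H _ (B (u' : H)) (u' : H)).re := by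
      rw [ContinuousLinearMap.add_apply, inner_add_left, Complex.add_re]
    rw [Submodule.subtype_apply]
    rw [hsplit] at hABu
    nlinarith
  calc ((Module.finrank ℂ L : ℕ) : ℝ≥0∞)
      ≤ ((Module.finrank ℂ Mp + Module.finrank ℂ Mm : ℕ) : ℝ≥0∞) := by exact_mod_cast hdim
    _ = (Module.finrank ℂ Mp : ℝ≥0∞) + (Module.finrank ℂ Mm : ℝ≥0∞) := by push_cast; ring
    _ ≤ nPlus A a + nPlus B b :=
        add_le_add (le_nPlus A a Mp hMpfd hApos) (le_nPlus B b Mm hMmfd hBpos)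


lemma my_limsup_add_le (u v : ℝ → ℝ≥0∞) (l : Filter ℝ) :
    limsup (fun x => u x + v x) l ≤ limsup u l + limsup v l := by
  rcases eq_or_ne (limsup u l) ⊤ with hu | hu
  · rw [hu, top_add]; exact le_top
  rcases eq_or_ne (limsup v l) ⊤ with hv | hv
  · rw [hv, add_top]; exact le_top
  refine ENNReal.le_of_forall_pos_le_add fun η hη _ => ?_
  have h1 : limsup u l < limsup u l + η / 2 :=
    ENNReal.lt_add_right hu (by simpa using hη.ne')
  have h2 : limsup v l < limsup v l + η / 2 :=
    ENNReal.lt_add_right hv (by simpa using hη.ne')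
  have e1 := eventually_lt_of_limsup_lt h1
  have e2 := eventually_lt_of_limsup_lt h2
  refine limsup_le_of_le isCobounded_le_of_bot ?_
  filter_upwards [e1, e2] with x hx1 hx2
  calc u x + v x ≤ (limsup u l + η / 2) + (limsup v l + η / 2) :=
        add_le_add hx1.le hx2.le
    _ = limsup u l + limsup v l + (η / 2 + η / 2) := by ring
    _ = limsup u l + limsup v l + η := by rw [ENNReal.add_halves]
    _ ≤ _ := le_rfl

lemma my_liminf_add_le (u v : ℝ → ℝ≥0∞) (l : Filter ℝ) [l.NeBot] :
    liminf (fun x => u x + v x) l ≤ limsup u l + liminf v l := by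
  rcases eq_or_ne (limsup u l) ⊤ with hu | hu
  · rw [hu, top_add]; exact le_top
  rcases eq_or_ne (liminf v l) ⊤ with hv | hv
  · rw [hv, add_top]; exact le_top
  refine ENNReal.le_of_forall_pos_le_add fun η hη _ => ?_
  have h1 : limsup u l < limsup u l + η / 2 :=
    ENNReal.lt_add_right hu (by simpa using hη.ne')
  have h2 : liminf v l < liminf v l + η / 2 :=
    ENNReal.lt_add_right hv (by simpa using hη.ne')
  have e1 := eventually_lt_of_limsup_lt h1
  have e2 := frequently_lt_of_liminf_lt isCobounded_ge_of_top h2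
  refine liminf_le_of_frequently_le ?_ (by isBoundedDefault)
  refine (e2.and_eventually e1).mono fun x hx => ?_
  calc u x + v x ≤ (limsup u l + η / 2) + (liminf v l + η / 2) :=
        add_le_add hx.2.le hx.1.le
    _ = limsup u l + liminf v l + (η / 2 + η / 2) := by ring
    _ = limsup u l + liminf v l + η := by rw [ENNReal.add_halves]


lemma tendsto_const_mul_nhdsWithin (s : ℝ) (hs : 0 < s) :
    Tendsto (fun lam : ℝ => s * lam) (𝓝[>] (0:ℝ)) (𝓝[>] (0:ℝ)) := by
  apply tendsto_nhdsWithin_of_tendsto_nhds_of_eventually_within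
  · have h0 : Tendsto (fun lam : ℝ => s * lam) (𝓝 (0:ℝ)) (𝓝 (s * 0)) :=
      (continuous_const.mul continuous_id).tendsto 0
    rw [mul_zero] at h0
    exact h0.mono_left nhdsWithin_le_nhds
  · filter_upwards [self_mem_nhdsWithin] with x hx
    exact mul_pos hs hx

set_option maxHeartbeats 2000000 in
lemma key_main (T : H →L[ℂ] H) (hT : IsSelfAdjoint T) (ε₀ : ℝ) (hε₀ : 0 < ε₀)
    (Tm Tr : ℝ → H →L[ℂ] H) (C : ℝ → ℝ)
    (h : ∀ ε : ℝ, 0 < ε → ε < ε₀ → IsSelfAdjoint (Tm ε) ∧ T = Tm ε + Tr ε ∧ 0 ≤ C ε ∧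
      Tendsto (fun lam : ℝ => ENNReal.ofReal lam * nPlus (Tm ε) lam) (𝓝[>] (0:ℝ))
        (𝓝 (ENNReal.ofReal (C ε))) ∧
      Filter.limsup (fun lam : ℝ => ENNReal.ofReal lam *
        (nPlus (Tr ε) lam + nPlus (-(Tr ε)) lam)) (𝓝[>] (0:ℝ)) ≤ ENNReal.ofReal ε) :
    ∃ CP : ℝ, 0 ≤ CP ∧ Tendsto C (𝓝[>] (0:ℝ)) (𝓝 CP) ∧
      Tendsto (fun lam : ℝ => ENNReal.ofReal lam * nPlus T lam) (𝓝[>] (0:ℝ))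
        (𝓝 (ENNReal.ofReal CP)) := by
  set l : Filter ℝ := 𝓝[>] (0:ℝ) with hl
  set F : ℝ → ℝ≥0∞ := fun lam => ENNReal.ofReal lam * nPlus T lam with hF
  -- the cancellation trick
  have cancel : ∀ (s lam : ℝ), 0 < s → 0 < lam → ∀ x : ℝ≥0∞,
      ENNReal.ofReal lam * x = (ENNReal.ofReal s)⁻¹ * (ENNReal.ofReal (s * lam) * x) := by
    intro s lam hs hlam x
    rw [ENNReal.ofReal_mul (le_of_lt hs), ← mul_assoc, ← mul_assoc,
      ENNReal.inv_mul_cancel (by simpa using hs) ENNReal.ofReal_ne_top, one_mul]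
  -- Step A : upper bound for limsup F
  have stepA : ∀ s ε : ℝ, 0 < s → s < 1 → 0 < ε → ε < ε₀ →
      limsup F l ≤ (ENNReal.ofReal (1 - s))⁻¹ * ENNReal.ofReal (C ε)
        + (ENNReal.ofReal s)⁻¹ * ENNReal.ofReal ε := by
    intro s ε hs hs1 hε hεε₀
    obtain ⟨hTmsa, hdecomp, hC0, hTend, hlimsupG⟩ := h ε hε hεε₀
    set G : ℝ → ℝ≥0∞ := fun lam =>
      ENNReal.ofReal lam * (nPlus (Tr ε) lam + nPlus (-(Tr ε)) lam) with hG
    set g1 : ℝ → ℝ≥0∞ := fun lam =>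
      (ENNReal.ofReal (1 - s))⁻¹ * (ENNReal.ofReal ((1 - s) * lam) * nPlus (Tm ε) ((1 - s) * lam))
      with hg1
    set g2 : ℝ → ℝ≥0∞ := fun lam => (ENNReal.ofReal s)⁻¹ * G (s * lam) with hg2
    have hpoint : ∀ᶠ lam in l, F lam ≤ g1 lam + g2 lam := by
      filter_upwards [self_mem_nhdsWithin] with lam hlam
      have hlam' : (0:ℝ) < lam := hlam
      have hsplit : nPlus T lam ≤ nPlus (Tm ε) ((1 - s) * lam) + nPlus (Tr ε) (s * lam) := by
        have e1 : T = Tm ε + Tr ε := hdecomp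
        have e2 : lam = (1 - s) * lam + s * lam := by ring
        calc nPlus T lam = nPlus (Tm ε + Tr ε) ((1 - s) * lam + s * lam) := by rw [← e1, ← e2]
          _ ≤ _ := nPlus_add_le (Tm ε) (Tr ε) hTmsa _ _
      calc F lam ≤ ENNReal.ofReal lam *
            (nPlus (Tm ε) ((1 - s) * lam) + nPlus (Tr ε) (s * lam)) := by
            exact mul_le_mul_right hsplit _
        _ = ENNReal.ofReal lam * nPlus (Tm ε) ((1 - s) * lam)
            + ENNReal.ofReal lam * nPlus (Tr ε) (s * lam) := by rw [mul_add]
        _ ≤ g1 lam + g2 lam := by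
            refine add_le_add ?_ ?_
            · rw [hg1]
              rw [cancel (1 - s) lam (by linarith) hlam' _]
            · rw [hg2, hG]
              rw [cancel s lam hs hlam' _]
              exact mul_le_mul_right (mul_le_mul_right le_self_add _) _
    have hg1lim : Tendsto g1 l (𝓝 ((ENNReal.ofReal (1 - s))⁻¹ * ENNReal.ofReal (C ε))) := by
      have hcomp := hTend.comp (tendsto_const_mul_nhdsWithin (1 - s) (by linarith))
      exact ENNReal.Tendsto.const_mul hcomp
        (Or.inr (ENNReal.inv_ne_top.mpr (by simpa using (by linarith : (0:ℝ) < 1 - s))))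
    have hg2limsup : limsup g2 l ≤ (ENNReal.ofReal s)⁻¹ * ENNReal.ofReal ε := by
      have h1 : limsup g2 l = (ENNReal.ofReal s)⁻¹ * limsup (fun lam => G (s * lam)) l := by
        rw [hg2]
        exact ENNReal.limsup_const_mul_of_ne_top (ENNReal.inv_ne_top.mpr (by simpa using hs))
      rw [h1]
      refine mul_le_mul_right ?_ _
      have h2 : limsup (fun lam => G (s * lam)) l = limsup G (Filter.map (fun lam => s * lam) l) := by
        rw [Filter.limsup, Filter.limsup, Filter.map_map]
        rfl
      rw [h2]
      exact le_trans (limsup_le_limsup_of_le (tendsto_const_mul_nhdsWithin s hs)) hlimsupG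
    calc limsup F l ≤ limsup (fun lam => g1 lam + g2 lam) l := limsup_le_limsup hpoint
      _ ≤ limsup g1 l + limsup g2 l := my_limsup_add_le g1 g2 l
      _ ≤ _ := add_le_add (le_of_eq hg1lim.limsup_eq) hg2limsup
  -- Step B : lower bound for liminf F
  have stepB : ∀ s ε : ℝ, 0 < s → s < 1 → 0 < ε → ε < ε₀ →
      (ENNReal.ofReal (1 + s))⁻¹ * ENNReal.ofReal (C ε)
        ≤ liminf F l + (ENNReal.ofReal s)⁻¹ * ENNReal.ofReal ε := by
    intro s ε hs hs1 hε hεε₀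
    obtain ⟨hTmsa, hdecomp, hC0, hTend, hlimsupG⟩ := h ε hε hεε₀
    set G : ℝ → ℝ≥0∞ := fun lam =>
      ENNReal.ofReal lam * (nPlus (Tr ε) lam + nPlus (-(Tr ε)) lam) with hG
    set g2 : ℝ → ℝ≥0∞ := fun lam => (ENNReal.ofReal s)⁻¹ * G (s * lam) with hg2
    set g0 : ℝ → ℝ≥0∞ := fun lam =>
      (ENNReal.ofReal (1 + s))⁻¹ * (ENNReal.ofReal ((1 + s) * lam) * nPlus (Tm ε) ((1 + s) * lam))
      with hg0
    have hpoint : ∀ᶠ lam in l, g0 lam ≤ g2 lam + F lam := by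
      filter_upwards [self_mem_nhdsWithin] with lam hlam
      have hlam' : (0:ℝ) < lam := hlam
      have hTmeq : Tm ε = T + -(Tr ε) := by rw [hdecomp]; abel
      have hsplit : nPlus (Tm ε) ((1 + s) * lam) ≤ nPlus T lam + nPlus (-(Tr ε)) (s * lam) := by
        have e2 : (1 + s) * lam = lam + s * lam := by ring
        calc nPlus (Tm ε) ((1 + s) * lam) = nPlus (T + -(Tr ε)) (lam + s * lam) := by
              rw [← hTmeq, ← e2]
          _ ≤ _ := nPlus_add_le T (-(Tr ε)) hT _ _
      have e3 : g0 lam = ENNReal.ofReal lam * nPlus (Tm ε) ((1 + s) * lam) := by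
        simp only [hg0]
        rw [← cancel (1 + s) lam (by linarith) hlam' _]
      rw [e3]
      calc ENNReal.ofReal lam * nPlus (Tm ε) ((1 + s) * lam)
          ≤ ENNReal.ofReal lam * (nPlus T lam + nPlus (-(Tr ε)) (s * lam)) :=
            mul_le_mul_right hsplit _
        _ = ENNReal.ofReal lam * nPlus (-(Tr ε)) (s * lam) + F lam := by
            rw [mul_add]; rw [add_comm]
        _ ≤ g2 lam + F lam := by
            refine add_le_add ?_ le_rfl
            rw [hg2, hG, cancel s lam hs hlam' _]
            exact mul_le_mul_right (mul_le_mul_right le_add_self _) _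
    have hg0lim : Tendsto g0 l (𝓝 ((ENNReal.ofReal (1 + s))⁻¹ * ENNReal.ofReal (C ε))) := by
      have hcomp := hTend.comp (tendsto_const_mul_nhdsWithin (1 + s) (by linarith))
      exact ENNReal.Tendsto.const_mul hcomp
        (Or.inr (ENNReal.inv_ne_top.mpr (by simpa using (by linarith : (0:ℝ) < 1 + s))))
    have hg2limsup : limsup g2 l ≤ (ENNReal.ofReal s)⁻¹ * ENNReal.ofReal ε := by
      have h1 : limsup g2 l = (ENNReal.ofReal s)⁻¹ * limsup (fun lam => G (s * lam)) l := by
        rw [hg2]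
        exact ENNReal.limsup_const_mul_of_ne_top (ENNReal.inv_ne_top.mpr (by simpa using hs))
      rw [h1]
      refine mul_le_mul_right ?_ _
      have h2 : limsup (fun lam => G (s * lam)) l = limsup G (Filter.map (fun lam => s * lam) l) := by
        rw [Filter.limsup, Filter.limsup, Filter.map_map]
        rfl
      rw [h2]
      exact le_trans (limsup_le_limsup_of_le (tendsto_const_mul_nhdsWithin s hs)) hlimsupG
    calc (ENNReal.ofReal (1 + s))⁻¹ * ENNReal.ofReal (C ε) = liminf g0 l :=
          hg0lim.liminf_eq.symm
      _ ≤ liminf (fun lam => g2 lam + F lam) l := liminf_le_liminf hpoint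
      _ ≤ limsup g2 l + liminf F l := my_liminf_add_le g2 F l
      _ ≤ _ := by
          rw [add_comm]
          exact add_le_add le_rfl hg2limsup
  -- Step C : limsup F = liminf F, both finite
  haveI hNB : l.NeBot := by rw [hl]; exact nhdsGT_neBot 0
  set A := limsup F l with hA
  set Bl := liminf F l with hBl2
  have hBA : Bl ≤ A := liminf_le_limsup
  have hAtop : A ≠ ⊤ := by
    have hstep := stepA (1/2) (ε₀/2) (by norm_num) (by norm_num) (by linarith) (by linarith)
    refine ne_top_of_le_ne_top ?_ hstep
    refine ENNReal.add_ne_top.mpr ⟨?_, ?_⟩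
    · exact ENNReal.mul_ne_top
        (ENNReal.inv_ne_top.mpr (by norm_num)) ENNReal.ofReal_ne_top
    · exact ENNReal.mul_ne_top
        (ENNReal.inv_ne_top.mpr (by norm_num)) ENNReal.ofReal_ne_top
  have hBtop : Bl ≠ ⊤ := ne_top_of_le_ne_top hAtop hBA
  set Ar := A.toReal with hAr
  set Br := Bl.toReal with hBr
  have hA_eq : A = ENNReal.ofReal Ar := (ENNReal.ofReal_toReal hAtop).symm
  have hB_eq : Bl = ENNReal.ofReal Br := (ENNReal.ofReal_toReal hBtop).symm
  have hBr0 : 0 ≤ Br := ENNReal.toReal_nonneg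
  have hBrAr : Br ≤ Ar := ENNReal.toReal_mono hAtop hBA
  have ra : ∀ s ε : ℝ, 0 < s → s < 1 → 0 < ε → ε < ε₀ →
      Ar ≤ (1 - s)⁻¹ * C ε + s⁻¹ * ε := by
    intro s ε hs hs1 hε hεε₀
    obtain ⟨-, -, hC0, -, -⟩ := h ε hε hεε₀
    have hst := stepA s ε hs hs1 hε hεε₀
    have hconv : (ENNReal.ofReal (1 - s))⁻¹ * ENNReal.ofReal (C ε)
        + (ENNReal.ofReal s)⁻¹ * ENNReal.ofReal ε
        = ENNReal.ofReal ((1 - s)⁻¹ * C ε + s⁻¹ * ε) := by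
      rw [← ENNReal.ofReal_inv_of_pos (by linarith), ← ENNReal.ofReal_inv_of_pos hs,
        ← ENNReal.ofReal_mul (inv_nonneg.mpr (by linarith : (0:ℝ) ≤ 1 - s)),
        ← ENNReal.ofReal_mul (inv_nonneg.mpr hs.le),
        ← ENNReal.ofReal_add (mul_nonneg (inv_nonneg.mpr (by linarith)) hC0)
          (mul_nonneg (inv_nonneg.mpr hs.le) hε.le)]
    rw [hconv] at hst
    exact ENNReal.toReal_le_of_le_ofReal
      (add_nonneg (mul_nonneg (inv_nonneg.mpr (by linarith)) hC0)
        (mul_nonneg (inv_nonneg.mpr hs.le) hε.le)) hst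
  have rb : ∀ s ε : ℝ, 0 < s → s < 1 → 0 < ε → ε < ε₀ →
      (1 + s)⁻¹ * C ε ≤ Br + s⁻¹ * ε := by
    intro s ε hs hs1 hε hεε₀
    obtain ⟨-, -, hC0, -, -⟩ := h ε hε hεε₀
    have hst := stepB s ε hs hs1 hε hεε₀
    rw [hB_eq] at hst
    have h2 : (ENNReal.ofReal (1 + s))⁻¹ * ENNReal.ofReal (C ε)
        = ENNReal.ofReal ((1 + s)⁻¹ * C ε) := by
      rw [← ENNReal.ofReal_inv_of_pos (by linarith),
        ← ENNReal.ofReal_mul (inv_nonneg.mpr (by linarith : (0:ℝ) ≤ 1 + s))]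
    have h3 : ENNReal.ofReal Br + (ENNReal.ofReal s)⁻¹ * ENNReal.ofReal ε
        = ENNReal.ofReal (Br + s⁻¹ * ε) := by
      rw [← ENNReal.ofReal_inv_of_pos hs, ← ENNReal.ofReal_mul (inv_nonneg.mpr hs.le),
        ← ENNReal.ofReal_add hBr0 (mul_nonneg (inv_nonneg.mpr hs.le) hε.le)]
    rw [h2, h3] at hst
    exact (ENNReal.ofReal_le_ofReal_iff
      (add_nonneg hBr0 (mul_nonneg (inv_nonneg.mpr hs.le) hε.le))).mp hst
  -- square-root facts
  have hsq : Tendsto Real.sqrt (𝓝[>] (0:ℝ)) (𝓝 0) := by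
    have h0 := Real.continuous_sqrt.tendsto 0
    rw [Real.sqrt_zero] at h0
    exact h0.mono_left nhdsWithin_le_nhds
  have hmin : (0:ℝ) < min ε₀ 1 := lt_min hε₀ one_pos
  have hev : ∀ᶠ ε in 𝓝[>] (0:ℝ), ε ∈ Set.Ioo 0 (min ε₀ 1) :=
    Filter.eventually_of_mem (Ioo_mem_nhdsGT_of_mem ⟨le_refl 0, hmin⟩) fun x hx => hx
  have sfacts : ∀ ε : ℝ, ε ∈ Set.Ioo (0:ℝ) (min ε₀ 1) →
      0 < Real.sqrt ε ∧ Real.sqrt ε < 1 ∧ (Real.sqrt ε)⁻¹ * ε = Real.sqrt ε ∧ ε < ε₀ := by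
    intro ε hε
    have h1 : 0 < Real.sqrt ε := Real.sqrt_pos.mpr hε.1
    have h2 : Real.sqrt ε < 1 := by
      have := Real.sqrt_lt_sqrt hε.1.le (lt_of_lt_of_le hε.2 (min_le_right _ _))
      rwa [Real.sqrt_one] at this
    have h3 : (Real.sqrt ε)⁻¹ * ε = Real.sqrt ε := by
      nth_rewrite 2 [← Real.mul_self_sqrt hε.1.le]
      rw [← mul_assoc, inv_mul_cancel₀ h1.ne', one_mul]
    exact ⟨h1, h2, h3, lt_of_lt_of_le hε.2 (min_le_left _ _)⟩
  have hCle : ∀ ε : ℝ, ε ∈ Set.Ioo (0:ℝ) (min ε₀ 1) →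
      C ε ≤ (1 + Real.sqrt ε) * (Br + Real.sqrt ε) := by
    intro ε hε
    obtain ⟨h1, h2, h3, h4⟩ := sfacts ε hε
    have hrb := rb (Real.sqrt ε) ε h1 h2 hε.1 h4
    rw [h3] at hrb
    have hmul := mul_le_mul_of_nonneg_left hrb (by linarith : (0:ℝ) ≤ 1 + Real.sqrt ε)
    rwa [← mul_assoc, mul_inv_cancel₀ (by linarith : (1:ℝ) + Real.sqrt ε ≠ 0), one_mul] at hmul
  have hArBr : Ar ≤ Br := by
    have hbound : ∀ᶠ ε in 𝓝[>] (0:ℝ), Ar ≤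
        (1 - Real.sqrt ε)⁻¹ * ((1 + Real.sqrt ε) * (Br + Real.sqrt ε)) + Real.sqrt ε := by
      filter_upwards [hev] with ε hε
      obtain ⟨h1, h2, h3, h4⟩ := sfacts ε hε
      have hra := ra (Real.sqrt ε) ε h1 h2 hε.1 h4
      rw [h3] at hra
      refine le_trans hra (add_le_add ?_ le_rfl)
      exact mul_le_mul_of_nonneg_left (hCle ε hε) (inv_nonneg.mpr (by linarith))
    have htend : Tendsto (fun ε : ℝ =>
        (1 - Real.sqrt ε)⁻¹ * ((1 + Real.sqrt ε) * (Br + Real.sqrt ε)) + Real.sqrt ε)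
        (𝓝[>] (0:ℝ)) (𝓝 Br) := by
      have t1 : Tendsto (fun ε : ℝ => 1 - Real.sqrt ε) (𝓝[>] (0:ℝ)) (𝓝 1) := by
        simpa using tendsto_const_nhds.sub hsq
      have t2 : Tendsto (fun ε : ℝ => 1 + Real.sqrt ε) (𝓝[>] (0:ℝ)) (𝓝 1) := by
        simpa using tendsto_const_nhds.add hsq
      have t3 : Tendsto (fun ε : ℝ => Br + Real.sqrt ε) (𝓝[>] (0:ℝ)) (𝓝 Br) := by
        simpa using tendsto_const_nhds.add hsq
      have := ((t1.inv₀ one_ne_zero).mul (t2.mul t3)).add hsq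
      simpa using this
    exact ge_of_tendsto htend hbound
  have hArBr' : Ar = Br := le_antisymm hArBr hBrAr
  refine ⟨Ar, ENNReal.toReal_nonneg, ?_, ?_⟩
  · -- Tendsto C
    have evlow : ∀ᶠ ε in 𝓝[>] (0:ℝ),
        (1 - Real.sqrt ε) * (Ar - Real.sqrt ε) ≤ C ε := by
      filter_upwards [hev] with ε hε
      obtain ⟨h1, h2, h3, h4⟩ := sfacts ε hε
      have hra := ra (Real.sqrt ε) ε h1 h2 hε.1 h4
      rw [h3] at hra
      have hstep : Ar - Real.sqrt ε ≤ (1 - Real.sqrt ε)⁻¹ * C ε := by linarith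
      have hmul := mul_le_mul_of_nonneg_left hstep (by linarith : (0:ℝ) ≤ 1 - Real.sqrt ε)
      rwa [← mul_assoc, mul_inv_cancel₀ (by linarith : (1:ℝ) - Real.sqrt ε ≠ 0), one_mul] at hmul
    have evhigh : ∀ᶠ ε in 𝓝[>] (0:ℝ),
        C ε ≤ (1 + Real.sqrt ε) * (Ar + Real.sqrt ε) := by
      filter_upwards [hev] with ε hε
      rw [hArBr']
      exact hCle ε hε
    have tlow : Tendsto (fun ε : ℝ => (1 - Real.sqrt ε) * (Ar - Real.sqrt ε))
        (𝓝[>] (0:ℝ)) (𝓝 Ar) := by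
      have t1 : Tendsto (fun ε : ℝ => 1 - Real.sqrt ε) (𝓝[>] (0:ℝ)) (𝓝 1) := by
        simpa using tendsto_const_nhds.sub hsq
      have t3 : Tendsto (fun ε : ℝ => Ar - Real.sqrt ε) (𝓝[>] (0:ℝ)) (𝓝 Ar) := by
        simpa using tendsto_const_nhds.sub hsq
      simpa using t1.mul t3
    have thigh : Tendsto (fun ε : ℝ => (1 + Real.sqrt ε) * (Ar + Real.sqrt ε))
        (𝓝[>] (0:ℝ)) (𝓝 Ar) := by
      have t2 : Tendsto (fun ε : ℝ => 1 + Real.sqrt ε) (𝓝[>] (0:ℝ)) (𝓝 1) := by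
        simpa using tendsto_const_nhds.add hsq
      have t3 : Tendsto (fun ε : ℝ => Ar + Real.sqrt ε) (𝓝[>] (0:ℝ)) (𝓝 Ar) := by
        simpa using tendsto_const_nhds.add hsq
      simpa using t2.mul t3
    exact tendsto_of_tendsto_of_tendsto_of_le_of_le' tlow thigh evlow evhigh
  · -- Tendsto F
    have hliminf : liminf F l = ENNReal.ofReal Ar := by rw [← hBl2, hB_eq, hArBr']
    have hlimsup : limsup F l = ENNReal.ofReal Ar := by rw [← hA, hA_eq]
    exact tendsto_of_liminf_eq_limsup hliminf hlimsup


/-- the Birman–Solomyak asymptotic perturbation lemma. If a compact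
self-adjoint `T` splits for each small `ε` as `T = T_ε + T'_ε` with
`lim_{λ→0⁺} λ n_±(λ, T_ε) = C_ε^±` and `limsup_{λ→0⁺} λ n(λ, T'_ε) ≤ ε`, then the limits
`C^± = lim_{ε→0⁺} C_ε^±` exist and `lim_{λ→0⁺} λ n_±(λ, T) = C^±`. -/
theorem stmt16 (T : H →L[ℂ] H) (hTsa : IsSelfAdjoint T) (hTc : IsCompactOperator T)
    (ε₀ : ℝ) (hε₀ : 0 < ε₀)
    (Tm Tr : ℝ → H →L[ℂ] H) (Cp Cm : ℝ → ℝ)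
    (hdec : ∀ ε : ℝ, 0 < ε → ε < ε₀ →
      IsSelfAdjoint (Tm ε) ∧ IsCompactOperator (Tm ε) ∧
      IsSelfAdjoint (Tr ε) ∧ IsCompactOperator (Tr ε) ∧
      T = Tm ε + Tr ε ∧ 0 ≤ Cp ε ∧ 0 ≤ Cm ε ∧
      Tendsto (fun lam : ℝ => ENNReal.ofReal lam * nPlus (Tm ε) lam)
        (𝓝[>] (0 : ℝ)) (𝓝 (ENNReal.ofReal (Cp ε))) ∧
      Tendsto (fun lam : ℝ => ENNReal.ofReal lam * nPlus (-(Tm ε)) lam)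
        (𝓝[>] (0 : ℝ)) (𝓝 (ENNReal.ofReal (Cm ε))) ∧
      Filter.limsup (fun lam : ℝ => ENNReal.ofReal lam *
          (nPlus (Tr ε) lam + nPlus (-(Tr ε)) lam)) (𝓝[>] (0 : ℝ)) ≤
        ENNReal.ofReal ε) :
    ∃ CP CM : ℝ, 0 ≤ CP ∧ 0 ≤ CM ∧
      Tendsto Cp (𝓝[>] (0 : ℝ)) (𝓝 CP) ∧ Tendsto Cm (𝓝[>] (0 : ℝ)) (𝓝 CM) ∧
      Tendsto (fun lam : ℝ => ENNReal.ofReal lam * nPlus T lam)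
        (𝓝[>] (0 : ℝ)) (𝓝 (ENNReal.ofReal CP)) ∧
      Tendsto (fun lam : ℝ => ENNReal.ofReal lam * nPlus (-T) lam)
        (𝓝[>] (0 : ℝ)) (𝓝 (ENNReal.ofReal CM)) := by
  obtain ⟨CP, hCP0, hCPt, hFP⟩ := key_main T hTsa ε₀ hε₀ Tm Tr Cp (fun ε hε hεε₀ => by
    obtain ⟨h1, h2, h3, h4, h5, h6, h7, h8, h9, h10⟩ := hdec ε hε hεε₀
    exact ⟨h1, h5, h6, h8, h10⟩)
  obtain ⟨CM, hCM0, hCMt, hFM⟩ := key_main (-T) hTsa.neg ε₀ hε₀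
    (fun ε => -(Tm ε)) (fun ε => -(Tr ε)) Cm (fun ε hε hεε₀ => by
      obtain ⟨h1, h2, h3, h4, h5, h6, h7, h8, h9, h10⟩ := hdec ε hε hεε₀
      refine ⟨h1.neg, by rw [h5]; abel, h7, h9, ?_⟩
      have heq : (fun lam : ℝ => ENNReal.ofReal lam *
          (nPlus (-(Tr ε)) lam + nPlus (-(-(Tr ε))) lam))
          = fun lam : ℝ => ENNReal.ofReal lam *
          (nPlus (Tr ε) lam + nPlus (-(Tr ε)) lam) := by
        funext lam
        rw [neg_neg, add_comm (nPlus (-(Tr ε)) lam)]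
      rw [heq]
      exact h10)
  exact ⟨CP, CM, hCP0, hCM0, hCPt, hCMt, hFP, hFM⟩


end
end

section
/- Let μ be a finite Borel measure on ℝ^N and let V be a μ-measurable real-valued function with ∫ Ψ(|V|) dμ < ∞. If (E_n) is a sequence of Borel sets with μ(E_n) → 0 as n → ∞, then ‖V‖_{E_n}^{(av,Ψ;μ)} → 0 as n → ∞. -/
open MeasureTheory Filter Topology
open scoped ENNReal NNReal

noncomputable section

/-- Euclidean space `ℝ^N`. -/
abbrev EucN (N : ℕ) := EuclideanSpace ℝ (Fin N)

/-- The Orlicz function `Ψ(t) = (1+t)log(1+t) − t`. -/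
def PsiF (t : ℝ) : ℝ := (1 + t) * Real.log (1 + t) - t

/-- The Orlicz function `Φ(t) = e^t − 1 − t`, dual to `Ψ`. -/
def PhiF (t : ℝ) : ℝ := Real.exp t - 1 - t

/-- The averaged Orlicz norm `‖V‖_E^{(av,Ψ;μ)}`. -/
def avNorm {α : Type*} [MeasurableSpace α] (μ : Measure α) (V : α → ℝ) (E : Set α) : ℝ :=
  if μ E = 0 then 0
  else sSup {r : ℝ | ∃ g : α → ℝ, Measurable g ∧
    (∫⁻ x in E, ENNReal.ofReal (PhiF |g x|) ∂μ) ≤ μ E ∧ r = |∫ x in E, V x * g x ∂μ|}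

lemma young (s t : ℝ) (hs : 0 ≤ s) (ht : 0 ≤ t) : s * t ≤ PsiF s + PhiF t := by
  have h1 : Real.exp t = (1 + s) * Real.exp (t - Real.log (1 + s)) := by
    rw [Real.exp_sub, Real.exp_log (by linarith)]
    field_simp
  have h2 := Real.add_one_le_exp (t - Real.log (1 + s))
  have h3 : (1 + s) * (t - Real.log (1 + s) + 1) ≤ (1 + s) * Real.exp (t - Real.log (1 + s)) :=
    mul_le_mul_of_nonneg_left h2 (by linarith)
  simp only [PsiF, PhiF]
  nlinarith [h3, h1]

lemma phi_nonneg (t : ℝ) : 0 ≤ PhiF t := by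
  have := Real.add_one_le_exp t
  simp only [PhiF]; linarith

/-- bound for members of the sSup set -/
lemma mem_bound {α : Type*} [MeasurableSpace α] (μ : Measure α) [IsFiniteMeasure μ]
    (V : α → ℝ) (hV : ∫⁻ x, ENNReal.ofReal (PsiF |V x|) ∂μ ≠ ∞)
    (E : Set α) {r : ℝ}
    (hr : r ∈ {r : ℝ | ∃ g : α → ℝ, Measurable g ∧
      (∫⁻ x in E, ENNReal.ofReal (PhiF |g x|) ∂μ) ≤ μ E ∧ r = |∫ x in E, V x * g x ∂μ|}) :
    r ≤ (∫⁻ x in E, ENNReal.ofReal (PsiF |V x|) ∂μ).toReal + (μ E).toReal := by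
  obtain ⟨g, hg, hgΦ, rfl⟩ := hr
  set A := ∫⁻ x in E, ENNReal.ofReal (PsiF |V x|) ∂μ with hA
  have hAfin : A ≠ ∞ := (lt_of_le_of_lt (setLIntegral_le_lintegral _ _) hV.lt_top).ne
  have hEfin : μ E ≠ ∞ := (measure_lt_top μ E).ne
  by_cases hInt : Integrable (fun x => V x * g x) (μ.restrict E)
  · have h1 : |∫ x in E, V x * g x ∂μ| ≤ ∫ x in E, |V x| * |g x| ∂μ :=
      by simpa [Real.norm_eq_abs] using norm_integral_le_integral_norm (μ := μ.restrict E) (fun x => V x * g x)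
    have h2 : ∫ x in E, |V x| * |g x| ∂μ
        = (∫⁻ x in E, ENNReal.ofReal |V x * g x| ∂μ).toReal := by
      simp only [← abs_mul]
      rw [integral_eq_lintegral_of_nonneg_ae (Filter.Eventually.of_forall fun x => abs_nonneg _)
        hInt.abs.aestronglyMeasurable]
    have h3 : (∫⁻ x in E, ENNReal.ofReal |V x * g x| ∂μ) ≤ A + μ E := by
      calc (∫⁻ x in E, ENNReal.ofReal |V x * g x| ∂μ)
          ≤ ∫⁻ x in E, (ENNReal.ofReal (PsiF |V x|) + ENNReal.ofReal (PhiF |g x|)) ∂μ := by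
            refine lintegral_mono fun x => ?_
            calc ENNReal.ofReal |V x * g x|
                ≤ ENNReal.ofReal (PsiF |V x| + PhiF |g x|) := by
                  apply ENNReal.ofReal_le_ofReal
                  rw [abs_mul]
                  exact young _ _ (abs_nonneg _) (abs_nonneg _)
              _ ≤ _ := ENNReal.ofReal_add_le
        _ = A + ∫⁻ x in E, ENNReal.ofReal (PhiF |g x|) ∂μ := by
            rw [lintegral_add_right]
            exact (Real.measurable_exp.comp hg.abs |>.sub measurable_const |>.sub
              hg.abs).ennreal_ofReal
        _ ≤ A + μ E := add_le_add le_rfl hgΦ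
    calc |∫ x in E, V x * g x ∂μ| ≤ (∫⁻ x in E, ENNReal.ofReal |V x * g x| ∂μ).toReal :=
          le_of_le_of_eq h1 h2
      _ ≤ (A + μ E).toReal := ENNReal.toReal_mono (by simp [hAfin, hEfin]) h3
      _ = A.toReal + (μ E).toReal := ENNReal.toReal_add hAfin hEfin
  · rw [integral_undef hInt]
    simp
    positivity

/-- absolute continuity of the averaged Orlicz norm. If `∫ Ψ(|V|) dμ < ∞`
and `μ(E_n) → 0`, then `‖V‖_{E_n}^{(av,Ψ;μ)} → 0`. -/
theorem stmt17 (N : ℕ) (μ : Measure (EucN N)) [IsFiniteMeasure μ]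
    (V : EucN N → ℝ) (hVmeas : AEMeasurable V μ)
    (hV : ∫⁻ x, ENNReal.ofReal (PsiF |V x|) ∂μ ≠ ∞)
    (E : ℕ → Set (EucN N)) (hE : ∀ n, MeasurableSet (E n))
    (hμE : Tendsto (fun n => μ (E n)) atTop (𝓝 0)) :
    Tendsto (fun n => avNorm μ V (E n)) atTop (𝓝 0) := by
  set B : ℕ → ℝ := fun n => (∫⁻ x in E n, ENNReal.ofReal (PsiF |V x|) ∂μ).toReal
      + (μ (E n)).toReal with hB
  have hzero : ∀ n, (0:ℝ) ∈ {r : ℝ | ∃ g : EucN N → ℝ, Measurable g ∧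
      (∫⁻ x in E n, ENNReal.ofReal (PhiF |g x|) ∂μ) ≤ μ (E n) ∧
      r = |∫ x in E n, V x * g x ∂μ|} := by
    intro n
    refine ⟨0, measurable_const, ?_, ?_⟩
    · simp [PhiF]
    · simp
  have hle : ∀ n, avNorm μ V (E n) ≤ B n := by
    intro n
    rw [avNorm]
    split_ifs with h
    · positivity
    · exact Real.sSup_le (fun r hr => mem_bound μ V hV (E n) hr) (by positivity)
  have hge : ∀ n, 0 ≤ avNorm μ V (E n) := by
    intro n
    rw [avNorm]
    split_ifs with h
    · exact le_refl 0
    · exact le_csSup ⟨B n, fun r hr => mem_bound μ V hV (E n) hr⟩ (hzero n)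
  have hBlim : Tendsto B atTop (𝓝 0) := by
    have h1 : Tendsto (fun n => (∫⁻ x in E n, ENNReal.ofReal (PsiF |V x|) ∂μ)) atTop (𝓝 0) :=
      tendsto_setLIntegral_zero hV hμE
    have h2 : Tendsto (fun n => (∫⁻ x in E n,
        ENNReal.ofReal (PsiF |V x|) ∂μ).toReal) atTop (𝓝 0) := by
      simpa [Function.comp_def] using (ENNReal.tendsto_toReal (by simp)).comp h1
    have h3 : Tendsto (fun n => (μ (E n)).toReal) atTop (𝓝 0) := by
      simpa [Function.comp_def] using (ENNReal.tendsto_toReal (by simp)).comp hμE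
    simpa using h2.add h3
  exact squeeze_zero hge hle hBlim


end
end
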